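/- arXiv:2005.13944 — 4 statements merged into one kernel-verified Lean document; each statement's English description precedes it below -/
import Mathlib

section
/- Let (α_{ij})_{0≤i,j≤m} be an invertible complex matrix and n_0,…,n_m nonzero complex numbers satisfying the orthogonality relation Σ_{i=0}^m α_{il}·conj(α_{ik}) = δ_{l,k}·n_k for all l,k, where conj(α_{ik}) = α_{i*k} for some involution * of indices. Suppose σ is a field automorphism of ℂ and τ a permutation of {0,…,m} with σ(α_{ij}) = α_{i,τ(j)} for all i,j. Then σ(n_k) = n_{τ(k)} for all k. -/
/-- Proposition 14, Equation (18): σ(n_k) = n_{τ(k)}. -/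
theorem stmt2 (m : ℕ) (α : Fin (m + 1) → Fin (m + 1) → ℂ)
    (hα : IsUnit (Matrix.of α).det)
    (e : Equiv.Perm (Fin (m + 1))) (he : ∀ i, e (e i) = i)
    (n : Fin (m + 1) → ℂ) (hn : ∀ k, n k ≠ 0)
    (horth : ∀ l k, ∑ i, α i l * α (e i) k = if l = k then n k else 0)
    (σ : ℂ ≃+* ℂ) (τ : Equiv.Perm (Fin (m + 1)))
    (hσ : ∀ i j, σ (α i j) = α i (τ j)) :
    ∀ k, σ (n k) = n (τ k) := by
  intro k
  have h1 := horth k k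
  have h2 := horth (τ k) (τ k)
  simp only [eq_self_iff_true, if_true] at h1 h2
  calc σ (n k) = σ (∑ i, α i k * α (e i) k) := by rw [h1]
    _ = ∑ i, α i (τ k) * α (e i) (τ k) := by
        rw [map_sum]; simp [map_mul, hσ]
    _ = n (τ k) := h2
end

section
/- Let V be a finite-dimensional ℂ-vector space with a nondegenerate bilinear pairing ⟨·,·⟩ : A × V → ℂ, where A = ℂ^{m+1} with primitive idempotents E_i, functionals χ_i as above (χ_i(E_l)=δ_{il}d_i realized via the pairing), and suppose σ_E : V → V and σ_F : A* → A* are adjoint, i.e. ⟨χ, σ_E(z)⟩ = ⟨σ_F(χ), z⟩ for all χ, z, where V carries an algebra structure making the pairing satisfy d_i⟨χ_i, zz'⟩ = ⟨χ_i,z⟩⟨χ_i,z'⟩. If σ_E is an algebra homomorphism and σ_F is bijective, then there is a permutation η of {0,…,m} with σ_F(χ_i) = (d_i/d_{η(i)})·χ_{η(i)} for all i. -/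
/-- Proposition 32: if σ_E is an algebra map then σ_F permutes
the irreducible characters up to the scalars d_i/d_{η(i)}. -/
theorem stmt10 (m : ℕ) (CE : Type*) [CommRing CE] [Algebra ℂ CE]
    (bE : Module.Basis (Fin (m + 1)) ℂ CE)
    (hE : ∀ j l, bE j * bE l = if j = l then bE j else 0)
    (hone : ∑ l, bE l = 1)
    (d : Fin (m + 1) → ℂ) (hd : ∀ i, d i ≠ 0)
    (χ : Fin (m + 1) → Module.Dual ℂ CE)
    (hχ : ∀ i l, χ i (bE l) = if i = l then d i else 0)
    (htr : ∀ i z z', d i * χ i (z * z') = χ i z * χ i z')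
    (σE : CE →ₐ[ℂ] CE)
    (σF : Module.Dual ℂ CE →ₗ[ℂ] Module.Dual ℂ CE)
    (hσFbij : Function.Bijective σF)
    (hadj : ∀ (φ : Module.Dual ℂ CE) (z : CE), φ (σE z) = σF φ z) :
    ∃ η : Equiv.Perm (Fin (m + 1)), ∀ i, σF (χ i) = (d i / d (η i)) • χ (η i) := by
  classical
  set φ : Fin (m + 1) → Module.Dual ℂ CE := fun i => σF (χ i) with hφdef
  have hφ : ∀ i z, φ i z = χ i (σE z) := fun i z => (hadj (χ i) z).symm
  have hφmul : ∀ i z z', d i * φ i (z * z') = φ i z * φ i z' := by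
    intro i z z'
    rw [hφ, hφ, hφ, map_mul]
    exact htr i (σE z) (σE z')
  have hχone : ∀ i, χ i 1 = d i := by
    intro i
    rw [← hone, map_sum]
    simp [hχ]
  have hsum : ∀ i, ∑ l, φ i (bE l) = d i := by
    intro i
    rw [← map_sum, hone, hφ, map_one, hχone]
  have hvals : ∀ i l, φ i (bE l) = 0 ∨ φ i (bE l) = d i := by
    intro i l
    have h := hφmul i (bE l) (bE l)
    rw [hE l l, if_pos rfl] at h
    have h2 : φ i (bE l) * (φ i (bE l) - d i) = 0 := by linear_combination -h
    rcases mul_eq_zero.mp h2 with h1 | h1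
    · exact Or.inl h1
    · exact Or.inr (sub_eq_zero.mp h1)
  have horth : ∀ i j l, j ≠ l → φ i (bE j) * φ i (bE l) = 0 := by
    intro i j l hjl
    rw [← hφmul i (bE j) (bE l), hE j l, if_neg hjl, map_zero, mul_zero]
  -- exists l with φ i (bE l) = d i
  have hex : ∀ i, ∃ l, φ i (bE l) = d i := by
    intro i
    by_contra hcon
    push_neg at hcon
    have hzero : ∀ l, φ i (bE l) = 0 := fun l => (hvals i l).resolve_right (hcon l)
    have := hsum i
    simp [hzero] at this
    exact hd i this.symm
  choose η0 hη0 using hex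
  have hformula : ∀ i, σF (χ i) = (d i / d (η0 i)) • χ (η0 i) := by
    intro i
    apply bE.ext
    intro l
    show φ i (bE l) = ((d i / d (η0 i)) • χ (η0 i)) (bE l)
    simp only [LinearMap.smul_apply, smul_eq_mul, hχ]
    by_cases h : η0 i = l
    · subst h
      rw [if_pos rfl, div_mul_cancel₀ _ (hd (η0 i)), hη0]
    · rw [if_neg h, mul_zero]
      have := horth i (η0 i) l h
      rw [hη0] at this
      rcases mul_eq_zero.mp this with h1 | h1
      · exact absurd h1 (hd i)
      · exact h1
  have hinj : Function.Injective η0 := by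
    intro i j hij
    have h1 : σF ((d i)⁻¹ • χ i) = σF ((d j)⁻¹ • χ j) := by
      rw [map_smul, map_smul, hformula i, hformula j, hij, smul_smul, smul_smul]
      congr 1
      rw [← mul_div_assoc, ← mul_div_assoc, inv_mul_cancel₀ (hd i), inv_mul_cancel₀ (hd j)]
    have h2 := hσFbij.1 h1
    have h3 := congrArg (fun f : Module.Dual ℂ CE => f (bE i)) h2
    simp only [LinearMap.smul_apply, smul_eq_mul, hχ] at h3
    by_contra hne
    rw [if_pos trivial, if_neg (fun h => hne h.symm), inv_mul_cancel₀ (hd i), mul_zero] at h3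
    exact one_ne_zero h3
  refine ⟨Equiv.ofBijective η0 (Finite.injective_iff_bijective.mp hinj), ?_⟩
  intro i
  exact hformula i
end

section
/- Suppose d_0,…,d_m are nonzero complex numbers, * is an involution of {0,…,m}, n_j are nonzero scalars, F_j are linearly independent vectors, and the identity Σ_{j} n_j F_j ⊗ F_j = Σ_i χ_i ⊗ χ_{i*} holds in a tensor square of a vector space, where {χ_i} is a linearly independent family. If η is a permutation with Σ_j n_j F_j ⊗ F_j = Σ_i (d_i/d_{η(i)}) χ_{η(i)} ⊗ (d_{i*}/d_{η(i)*}) χ_{η(i)*}, then η(i*) = η(i)* and d_i d_{i*} = d_{η(i)} d_{η(i)*} for all i. -/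
open TensorProduct in
/-- Proposition 34: η(i*) = η(i)* and d_i d_{i*} = d_{η(i)} d_{η(i)*}. -/
theorem stmt12 (m : ℕ) (V : Type*) [AddCommGroup V] [Module ℂ V]
    (χ F : Fin (m + 1) → V)
    (hχ : LinearIndependent ℂ χ) (hF : LinearIndependent ℂ F)
    (e : Equiv.Perm (Fin (m + 1))) (he : ∀ i, e (e i) = i)
    (n : Fin (m + 1) → ℂ) (hn : ∀ j, n j ≠ 0)
    (d : Fin (m + 1) → ℂ) (hd : ∀ i, d i ≠ 0)
    (η : Equiv.Perm (Fin (m + 1)))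
    (h1 : ∑ j, n j • (F j ⊗ₜ[ℂ] F j) = ∑ i, χ i ⊗ₜ[ℂ] χ (e i))
    (h2 : ∑ j, n j • (F j ⊗ₜ[ℂ] F j) =
      ∑ i, ((d i / d (η i)) * (d (e i) / d (η (e i)))) • (χ (η i) ⊗ₜ[ℂ] χ (η (e i)))) :
    ∀ i, η (e i) = e (η i) ∧ d i * d (e i) = d (η i) * d (e (η i)) := by
  classical
  set b := Module.Basis.sumExtend hχ with hb
  have hbinl : ∀ a, b (Sum.inl a) = χ a := by
    intro a
    simp only [hb, Module.Basis.sumExtend, Module.Basis.coe_reindex, Equiv.symm_symm, Function.comp_apply,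
      Module.Basis.extend_apply_self]
    rfl
  obtain ⟨f, hf⟩ : ∃ f : Fin (m + 1) → V →ₗ[ℂ] ℂ,
      ∀ a c, f a (χ c) = if a = c then 1 else 0 := by
    refine ⟨fun a => b.coord (Sum.inl a), fun a c => ?_⟩
    rw [← hbinl c]
    simp [Module.Basis.coord_apply, Module.Basis.repr_self, Finsupp.single_apply, eq_comm]
  have h := h1.symm.trans h2
  have happ : ∀ a b', ∑ i, (f a (χ i)) * (f b' (χ (e i))) =
      ∑ i, ((d i / d (η i)) * (d (e i) / d (η (e i)))) *
        (f a (χ (η i)) * f b' (χ (η (e i)))) := by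
    intro a b'
    have := congrArg (fun x => (TensorProduct.lid ℂ ℂ) ((TensorProduct.map (f a) (f b')) x)) h
    simpa [map_sum, TensorProduct.map_tmul, TensorProduct.lid_tmul, smul_eq_mul] using this
  intro i₀
  have key := happ (η i₀) (e (η i₀))
  simp only [hf] at key
  have hL : ∑ i, (if η i₀ = i then (1:ℂ) else 0) * (if e (η i₀) = e i then 1 else 0) = 1 := by
    rw [Fintype.sum_eq_single (η i₀)]
    · simp
    · intro x hx; simp [Ne.symm hx]
  have hR : ∑ i, (d i / d (η i) * (d (e i) / d (η (e i)))) *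
      ((if η i₀ = η i then (1:ℂ) else 0) * (if e (η i₀) = η (e i) then 1 else 0)) =
      (d i₀ / d (η i₀) * (d (e i₀) / d (η (e i₀)))) *
        (if e (η i₀) = η (e i₀) then 1 else 0) := by
    rw [Fintype.sum_eq_single i₀]
    · simp
    · intro x hx
      have : η i₀ ≠ η x := fun hh => hx (η.injective hh).symm
      simp [this]
  rw [hL, hR] at key
  by_cases hcase : e (η i₀) = η (e i₀)
  · refine ⟨hcase.symm, ?_⟩
    rw [if_pos hcase, mul_one] at key
    rw [← hcase] at key
    have h1' := hd i₀; have h2' := hd (e i₀); have h3' := hd (η i₀); have h4' := hd (e (η i₀))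
    field_simp at key
    linear_combination -key
  · rw [if_neg hcase, mul_zero] at key
    exact absurd key one_ne_zero
end

section
/- Let A = ℂ^{m+1} with character basis {χ_i}, χ_i = Σ_j α_{ij}F_j, and suppose σ is a field automorphism of ℂ such that the map σ_F (defined by σ_F(χ_i) = Σ_j σ(α_{ij})F_j) satisfies σ_F(χ_i) = (d_i/d_{η(i)})χ_{η(i)} for a permutation η, where d_i = α_{i0} (the value at the distinguished idempotent F_0 corresponding to the dimension homomorphism). Then σ(d_i) = d_i for all i. -/
/-- Corollary 37: if σ_F(χ_i) = (d_i/d_{η(i)})χ_{η(i)} then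
σ(d_i) = d_i. -/
theorem stmt14 (m : ℕ) (V : Type*) [AddCommGroup V] [Module ℂ V]
    (F : Fin (m + 1) → V) (hF : LinearIndependent ℂ F)
    (α : Fin (m + 1) → Fin (m + 1) → ℂ)
    (χ : Fin (m + 1) → V) (hχ : ∀ i, χ i = ∑ j, α i j • F j)
    (hd : ∀ i, α i 0 ≠ 0)
    (σ : ℂ ≃+* ℂ) (η : Equiv.Perm (Fin (m + 1)))
    (hσF : ∀ i, (∑ j, σ (α i j) • F j) = (α i 0 / α (η i) 0) • χ (η i)) :
    ∀ i, σ (α i 0) = α i 0 := by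
  intro i
  have h := hσF i
  rw [hχ, Finset.smul_sum] at h
  have h0 : ∑ j, (σ (α i j) - (α i 0 / α (η i) 0) * α (η i) j) • F j = 0 := by
    simp only [sub_smul, mul_smul, Finset.sum_sub_distrib, h]
    simp [smul_smul]
  have := Fintype.linearIndependent_iff.mp hF _ h0 0
  have hc := sub_eq_zero.mp this
  rw [hc, div_mul_cancel₀ _ (hd (η i))]
end
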